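/- If the arbitrage index of a cycle of length n+1 satisfies I > 1/(r₁^{n+1}·r₂^{n+1}), then the reversed cycle A → Bⁿ → ⋯ → B¹ → A admits no profitable cyclic transaction: for every input δ > 0, the utility U_rev(δ) of the reversed cyclic transaction is strictly negative. -/

import Mathlib

/-- Constant-product AMM swap: output of swapping input `δ` through a pool with
input-side reserve `a`, output-side reserve `b` and fee parameters `r1, r2`. -/
noncomputable def swap (r1 r2 a b δ : ℝ) : ℝ := r1 * r2 * b * δ / (a + r1 * δ)

/-- Output of feeding an input through a sequence of pools; each pool is a pair
`(input-side reserve, output-side reserve)` along the direction of trade. -/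
noncomputable def cyclicOut (r1 r2 : ℝ) : List (ℝ × ℝ) → ℝ → ℝ
  | [], δ => δ
  | p :: ps, δ => cyclicOut r1 r2 ps (swap r1 r2 p.1 p.2 δ)

/-- Arbitrage index of a cycle of pools: product of output-side reserves divided
by product of input-side reserves. -/
noncomputable def arbIndex (ps : List (ℝ × ℝ)) : ℝ :=
  (ps.map Prod.snd).prod / (ps.map Prod.fst).prod

/-- The reversed cycle: the same pools in opposite order with the roles of the
two reserves of each pool interchanged. -/
def revPools (ps : List (ℝ × ℝ)) : List (ℝ × ℝ) := (ps.map Prod.swap).reverse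

/-- The updated pools after executing a cyclic transaction with input `δ`:
each pool's input-side reserve increases by the amount swapped in and its
output-side reserve decreases by the amount swapped out. -/
noncomputable def execPools (r1 r2 : ℝ) : List (ℝ × ℝ) → ℝ → List (ℝ × ℝ)
  | [], _ => []
  | p :: ps, δ =>
      (p.1 + δ, p.2 - swap r1 r2 p.1 p.2 δ) :: execPools r1 r2 ps (swap r1 r2 p.1 p.2 δ)

/-!
Each swap is strictly concave in its input and tangent at `0` to the linear map
`δ ↦ r₁ r₂ (b / a) δ`, so a cycle of `n + 1` pools returns strictly less than
`(r₁ r₂)^(n+1) · I · δ`. Reversing the cycle inverts its arbitrage index, so the reversed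
cycle returns less than `(r₁ r₂)^(n+1) / I · δ`, and this is at most `δ` because
`I > (r₁ r₂)^-(n+1) ≥ (r₁ r₂)^(n+1)` when `r₁ r₂ ≤ 1`.
-/

section Bounds

variable {r1 r2 : ℝ}

lemma swap_pos (hr1 : 0 < r1) (hr2 : 0 < r2) {a b δ : ℝ} (ha : 0 < a) (hb : 0 < b)
    (hδ : 0 < δ) : 0 < swap r1 r2 a b δ := by
  unfold swap; positivity

lemma swap_lt (hr1 : 0 < r1) (hr2 : 0 < r2) {a b δ : ℝ} (ha : 0 < a) (hb : 0 < b)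
    (hδ : 0 < δ) : swap r1 r2 a b δ < r1 * r2 * (b / a) * δ := by
  unfold swap
  rw [div_lt_iff₀ (by positivity)]
  have hslack : 0 < r1 * r2 * (b / a) * δ * (r1 * δ) := by positivity
  calc r1 * r2 * b * δ
      = r1 * r2 * (b / a) * δ * a := by field_simp
    _ < r1 * r2 * (b / a) * δ * a + r1 * r2 * (b / a) * δ * (r1 * δ) := by linarith
    _ = r1 * r2 * (b / a) * δ * (a + r1 * δ) := by ring

lemma cyclicOut_pos (hr1 : 0 < r1) (hr2 : 0 < r2) {ps : List (ℝ × ℝ)}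
    (hpos : ∀ p ∈ ps, 0 < p.1 ∧ 0 < p.2) {δ : ℝ} (hδ : 0 < δ) : 0 < cyclicOut r1 r2 ps δ := by
  induction ps generalizing δ with
  | nil => exact hδ
  | cons p ps ih =>
    obtain ⟨ha, hb⟩ := hpos p List.mem_cons_self
    exact ih (fun q hq => hpos q (List.mem_cons_of_mem p hq)) (swap_pos hr1 hr2 ha hb hδ)

lemma arbIndex_cons (p : ℝ × ℝ) (ps : List (ℝ × ℝ)) :
    arbIndex (p :: ps) = p.2 / p.1 * arbIndex ps := by
  simp only [arbIndex, List.map_cons, List.prod_cons, mul_div_mul_comm]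

lemma arbIndex_pos {ps : List (ℝ × ℝ)} (hpos : ∀ p ∈ ps, 0 < p.1 ∧ 0 < p.2) :
    0 < arbIndex ps := by
  induction ps with
  | nil => simp [arbIndex]
  | cons p ps ih =>
    obtain ⟨ha, hb⟩ := hpos p List.mem_cons_self
    rw [arbIndex_cons]
    have := ih fun q hq => hpos q (List.mem_cons_of_mem p hq)
    positivity

lemma linear_bound_cons (r1 r2 δ : ℝ) (p : ℝ × ℝ) (ps : List (ℝ × ℝ)) :
    (r1 * r2) ^ (p :: ps).length * arbIndex (p :: ps) * δ =
      (r1 * r2) ^ ps.length * arbIndex ps * (r1 * r2 * (p.2 / p.1) * δ) := by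
  rw [arbIndex_cons, List.length_cons, pow_succ]
  ring

lemma cyclicOut_le (hr1 : 0 < r1) (hr2 : 0 < r2) {ps : List (ℝ × ℝ)}
    (hpos : ∀ p ∈ ps, 0 < p.1 ∧ 0 < p.2) {δ : ℝ} (hδ : 0 < δ) :
    cyclicOut r1 r2 ps δ ≤ (r1 * r2) ^ ps.length * arbIndex ps * δ := by
  induction ps generalizing δ with
  | nil => simp [cyclicOut, arbIndex]
  | cons p ps ih =>
    obtain ⟨ha, hb⟩ := hpos p List.mem_cons_self
    have htail : ∀ q ∈ ps, 0 < q.1 ∧ 0 < q.2 := fun q hq => hpos q (List.mem_cons_of_mem p hq)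
    have hslope : 0 ≤ (r1 * r2) ^ ps.length * arbIndex ps := by
      have := arbIndex_pos htail
      positivity
    rw [linear_bound_cons]
    calc cyclicOut r1 r2 ps (swap r1 r2 p.1 p.2 δ)
        ≤ (r1 * r2) ^ ps.length * arbIndex ps * swap r1 r2 p.1 p.2 δ :=
          ih htail (swap_pos hr1 hr2 ha hb hδ)
      _ ≤ _ := mul_le_mul_of_nonneg_left (swap_lt hr1 hr2 ha hb hδ).le hslope

lemma cyclicOut_lt (hr1 : 0 < r1) (hr2 : 0 < r2) {ps : List (ℝ × ℝ)} (hne : ps ≠ [])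
    (hpos : ∀ p ∈ ps, 0 < p.1 ∧ 0 < p.2) {δ : ℝ} (hδ : 0 < δ) :
    cyclicOut r1 r2 ps δ < (r1 * r2) ^ ps.length * arbIndex ps * δ := by
  obtain ⟨p, ps, rfl⟩ := List.exists_cons_of_ne_nil hne
  obtain ⟨ha, hb⟩ := hpos p List.mem_cons_self
  have htail : ∀ q ∈ ps, 0 < q.1 ∧ 0 < q.2 := fun q hq => hpos q (List.mem_cons_of_mem p hq)
  have hslope : 0 < (r1 * r2) ^ ps.length * arbIndex ps := by
    have := arbIndex_pos htail
    positivity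
  rw [linear_bound_cons]
  calc cyclicOut r1 r2 ps (swap r1 r2 p.1 p.2 δ)
      ≤ (r1 * r2) ^ ps.length * arbIndex ps * swap r1 r2 p.1 p.2 δ :=
        cyclicOut_le hr1 hr2 htail (swap_pos hr1 hr2 ha hb hδ)
    _ < _ := mul_lt_mul_of_pos_left (swap_lt hr1 hr2 ha hb hδ) hslope

end Bounds

section Reversal

variable {ps : List (ℝ × ℝ)}

@[simp]
lemma length_revPools : (revPools ps).length = ps.length := by
  simp [revPools]

lemma mem_revPools {q : ℝ × ℝ} : q ∈ revPools ps ↔ q.swap ∈ ps := by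
  simp [revPools, List.mem_map, Prod.swap_eq_iff_eq_swap]

lemma arbIndex_revPools : arbIndex (revPools ps) = (arbIndex ps)⁻¹ := by
  simp [arbIndex, revPools, List.map_reverse, List.map_map, Function.comp_def,
    List.prod_reverse]

end Reversal

/-- if the arbitrage index of a cycle of length n+1 exceeds
1/(r1^(n+1) * r2^(n+1)), then the reversed cycle admits no profitable cyclic
transaction: every positive input has strictly negative utility. -/
theorem reversed_cycle_not_profitable
    (n : ℕ) (ps : List (ℝ × ℝ)) (hlen : ps.length = n + 1)
    (hpos : ∀ p ∈ ps, 0 < p.1 ∧ 0 < p.2)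
    (r1 r2 : ℝ) (hr1 : 0 < r1) (hr1' : r1 ≤ 1) (hr2 : 0 < r2) (hr2' : r2 ≤ 1)
    (hI : arbIndex ps > 1 / (r1 ^ (n + 1) * r2 ^ (n + 1))) :
    ∀ δ : ℝ, 0 < δ → cyclicOut r1 r2 (revPools ps) δ - δ < 0 := by
  intro δ hδ
  set c := (r1 * r2) ^ (n + 1) with hc
  have hc_pos : 0 < c := by positivity
  have hc_le_one : c ≤ 1 := pow_le_one₀ (by positivity) (mul_le_one₀ hr1' hr2.le hr2')
  have hc_le_I : c ≤ arbIndex ps := by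
    rw [← mul_pow, one_div] at hI
    calc c ≤ c⁻¹ := le_trans hc_le_one (one_le_inv₀ hc_pos |>.2 hc_le_one)
      _ ≤ arbIndex ps := hI.le
  have hrev_pos : ∀ q ∈ revPools ps, 0 < q.1 ∧ 0 < q.2 := fun q hq =>
    (hpos _ (mem_revPools.1 hq)).symm
  have hne : revPools ps ≠ [] := List.ne_nil_of_length_pos (by simp [hlen])
  have hout := cyclicOut_lt hr1 hr2 hne hrev_pos hδ
  rw [length_revPools, hlen, arbIndex_revPools, ← hc] at hout
  have hratio : c * (arbIndex ps)⁻¹ ≤ 1 := by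
    rw [← div_eq_mul_inv]
    exact (div_le_one (arbIndex_pos hpos)).2 hc_le_I
  linarith [mul_le_of_le_one_left hδ.le hratio]
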